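/- Let i ∈ [1,n] with b = low(i) > 1 and let j ∈ [1,i). If j ≤ low(b−1), then γ^1_{[1,2]}(j,i:i) = ∞ (i.e., is not defined: there is no [1,2]-dominating set D of G[1,i] with i ∈ D and D ∩ [j,i) = ∅). -/

import Mathlib

/-- `G` is a graph with vertex set `{1,…,n}` (all edges lie inside `{1,…,n}`),
whose adjacency satisfies the interval-graph numbering property: whenever
`i < j < k` and `i` is adjacent to `k`, then `j` is adjacent to `k`. -/
def GoodNumbering (G : SimpleGraph ℕ) (n : ℕ) : Prop :=
  (∀ u v : ℕ, G.Adj u v → u ∈ Finset.Icc 1 n ∧ v ∈ Finset.Icc 1 n) ∧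
  (∀ i j k : ℕ, i < j → j < k → G.Adj i k → G.Adj j k)

/-- `low a = min N[a]`, the minimum of the closed neighborhood of `a`. -/
noncomputable def low (G : SimpleGraph ℕ) (a : ℕ) : ℕ :=
  sInf {b : ℕ | b = a ∨ G.Adj a b}

/-- `lowI a b = min {low k : k ∈ [a,b]}`. -/
noncomputable def lowI (G : SimpleGraph ℕ) (a b : ℕ) : ℕ :=
  sInf (low G '' Set.Icc a b)

/-- `maxlow a = max {low k : low a ≤ k ≤ a}`. -/
noncomputable def maxlow (G : SimpleGraph ℕ) (a : ℕ) : ℕ :=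
  sSup (low G '' Set.Icc (low G a) a)

/-- `D` is a `[1,2]`-dominating set of the induced subgraph `G[1,i]`:
`D ⊆ [1,i]` and every vertex of `[1,i]` outside `D` has at least one and at
most two neighbors in `D`. -/
def Dom12 (G : SimpleGraph ℕ) (i : ℕ) (D : Finset ℕ) : Prop :=
  D ⊆ Finset.Icc 1 i ∧
  ∀ v ∈ Finset.Icc 1 i, v ∉ D →
    1 ≤ {u ∈ (D : Set ℕ) | G.Adj v u}.ncard ∧ {u ∈ (D : Set ℕ) | G.Adj v u}.ncard ≤ 2

/-- The minimum (in `ℕ∞`, with `sInf ∅ = ⊤`) of the cardinalities of the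
`[1,2]`-dominating sets `D` of `G[1,i]` satisfying the extra property `P`. -/
noncomputable def gval (G : SimpleGraph ℕ) (i : ℕ) (P : Finset ℕ → Prop) : ℕ∞ :=
  sInf {k : ℕ∞ | ∃ D : Finset ℕ, Dom12 G i D ∧ P D ∧ (D.card : ℕ∞) = k}

/-- `γ_{[1,2]}(i)`. -/
noncomputable def g12 (G : SimpleGraph ℕ) (i : ℕ) : ℕ∞ :=
  gval G i fun _ => True

/-- `γ⁰_{[1,2]}(j,i)`: no vertex of `[j,i]` is in `D`. -/
noncomputable def g0I (G : SimpleGraph ℕ) (j i : ℕ) : ℕ∞ :=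
  gval G i fun D => ∀ x ∈ Finset.Icc j i, x ∉ D

/-- `γ⁰_{[1,2]}(j,i:k)`: `k ∈ D` and no other vertex of `[j,i]` is in `D`. -/
noncomputable def g0Ik (G : SimpleGraph ℕ) (j i k : ℕ) : ℕ∞ :=
  gval G i fun D => k ∈ D ∧ ∀ x ∈ Finset.Icc j i, x ≠ k → x ∉ D

/-- `γ¹_{[1,2]}(i)`: `i ∈ D`. -/
noncomputable def g1 (G : SimpleGraph ℕ) (i : ℕ) : ℕ∞ :=
  gval G i fun D => i ∈ D

/-- `γ¹_{[1,2]}(j,i:i)`: `i ∈ D` and no vertex of `[j,i)` is in `D`. -/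
noncomputable def g1I (G : SimpleGraph ℕ) (j i : ℕ) : ℕ∞ :=
  gval G i fun D => i ∈ D ∧ ∀ x ∈ Finset.Ico j i, x ∉ D

/-- `γ¹_{[1,2]}(k,i:i,j)`: `i, j ∈ D` and no other vertex of `[k,i)` is in `D`. -/
noncomputable def g1Ij (G : SimpleGraph ℕ) (k i j : ℕ) : ℕ∞ :=
  gval G i fun D => i ∈ D ∧ j ∈ D ∧ ∀ x ∈ Finset.Ico k i, x ≠ j → x ∉ D

/-- `γ¹_{[1,2]}(l,i:i,j,k)`: `i, j, k ∈ D` and no other vertex of `[l,i)` is in `D`. -/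
noncomputable def g1Ijk (G : SimpleGraph ℕ) (l i j k : ℕ) : ℕ∞ :=
  gval G i fun D => i ∈ D ∧ j ∈ D ∧ k ∈ D ∧ ∀ x ∈ Finset.Ico l i, x ≠ j → x ≠ k → x ∉ D

/-- `γ¹¹_{[1,2]}(l,i:i,j,k)`: `i, j ∈ D`, all of `[l,k] ⊆ D`, and no vertex of
`(k,i)` other than `j` is in `D`. -/
noncomputable def g11Ijk (G : SimpleGraph ℕ) (l i j k : ℕ) : ℕ∞ :=
  gval G i fun D => i ∈ D ∧ j ∈ D ∧ (∀ x ∈ Finset.Icc l k, x ∈ D) ∧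
    ∀ x ∈ Finset.Ioo k i, x ≠ j → x ∉ D

theorem low_le_self (G : SimpleGraph ℕ) (a : ℕ) : low G a ≤ a :=
  Nat.sInf_le (Or.inl rfl)

theorem low_le_of_adj {G : SimpleGraph ℕ} {a c : ℕ} (h : G.Adj a c) : low G a ≤ c :=
  Nat.sInf_le (Or.inr h)

theorem gval_eq_top_iff {G : SimpleGraph ℕ} {i : ℕ} {P : Finset ℕ → Prop} :
    gval G i P = ⊤ ↔ ∀ D, Dom12 G i D → ¬ P D := by
  simp only [gval, sInf_eq_top, Set.mem_ofPred_eq]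
  constructor
  · rintro h D hD hP
    exact ENat.natCast_ne_top _ (h _ ⟨D, hD, hP, rfl⟩)
  · rintro h _ ⟨D, hD, hP, rfl⟩
    exact absurd hP (h D hD)

theorem Dom12.exists_adj_mem {G : SimpleGraph ℕ} {i : ℕ} {D : Finset ℕ} (hD : Dom12 G i D)
    {v : ℕ} (hv : v ∈ Finset.Icc 1 i) (hvD : v ∉ D) : ∃ u ∈ D, G.Adj v u := by
  obtain ⟨u, huD, hadj⟩ :=
    Set.nonempty_of_ncard_ne_zero (Nat.one_le_iff_ne_zero.mp (hD.2 v hv hvD).1)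
  exact ⟨u, huD, hadj⟩

/-- Every neighbour of `v` is at least `low v ≥ j`, so the only vertex of `D` that could
dominate `v` is `i`. -/
theorem g1I_eq_top_of_le_low_of_not_adj {G : SimpleGraph ℕ} {i j v : ℕ} (hv : 1 ≤ v)
    (hvi : v < i) (hjv : j ≤ low G v) (hnadj : ¬ G.Adj v i) : g1I G j i = ⊤ := by
  refine gval_eq_top_iff.mpr fun D hD ⟨_, havoid⟩ => ?_
  have hjv' : j ≤ v := hjv.trans (low_le_self G v)
  have hvD : v ∉ D := havoid v (Finset.mem_Ico.mpr ⟨hjv', hvi⟩)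
  obtain ⟨u, huD, hadj⟩ := hD.exists_adj_mem (Finset.mem_Icc.mpr ⟨hv, hvi.le⟩) hvD
  have hui : u ≤ i := (Finset.mem_Icc.mp (hD.1 huD)).2
  have hju : j ≤ u := hjv.trans (low_le_of_adj hadj)
  have hu_eq : u = i := by
    by_contra hne
    exact havoid u (Finset.mem_Ico.mpr ⟨hju, by omega⟩) huD
  exact hnadj (hu_eq ▸ hadj)

theorem g1I_eq_top_of_le_low_general (G : SimpleGraph ℕ) (i j b : ℕ)
    (hbdef : b = low G i) (hb : 1 < b)
    (hjle : j ≤ low G (b - 1)) :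
    g1I G j i = ⊤ := by
  have hbi : b ≤ i := hbdef ▸ low_le_self G i
  have hnadj : ¬ G.Adj (b - 1) i := fun h =>
    absurd (low_le_of_adj h.symm) (by omega)
  exact g1I_eq_top_of_le_low_of_not_adj (by omega) (by omega) hjle hnadj

/-- Lemma (i): with `b = low(i) > 1`, if `j ≤ low(b-1)` then `γ¹_{[1,2]}(j,i:i)` is
not defined (equals `⊤`). -/
theorem g1I_eq_top_of_le_low (G : SimpleGraph ℕ) (n : ℕ) (hn : 1 ≤ n)
    (hG : GoodNumbering G n) (i j b : ℕ) (hi : i ∈ Finset.Icc 1 n)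
    (hbdef : b = low G i) (hb : 1 < b) (hj : j ∈ Finset.Ico 1 i)
    (hjle : j ≤ low G (b - 1)) :
    g1I G j i = ⊤ :=
  g1I_eq_top_of_le_low_general G i j b hbdef hb hjle
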